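/- arXiv:1702.07194 — 7 statements merged into one kernel-verified Lean document; each statement's English description precedes it below -/
import Mathlib

section
/- Let g: [0,∞) → [0,∞) be upper semicontinuous and nondecreasing. Then g(t) < t for every t > 0 if and only if lim_{n→∞} g^n(t) = 0 for every t > 0, where g^n denotes the n-th iterate of g. -/
open Filter Topology Function

structure GMetricSpace (X : Type*) where
  G : X → X → X → ℝ
  nonneg : ∀ x y z, 0 ≤ G x y z
  eq_zero_iff : ∀ x y z, G x y z = 0 ↔ x = y ∧ y = z
  le_of_ne : ∀ x y z, z ≠ y → G x x y ≤ G x y z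
  symm_swap : ∀ x y z, G x y z = G x z y
  symm_cycle : ∀ x y z, G x y z = G y z x
  rect : ∀ x y z a, G x y z ≤ G x a a + G a y z

/-- `(x_n)` G-converges to `x`. -/
def GConv {X : Type*} (g : GMetricSpace X) (s : ℕ → X) (x : X) : Prop :=
  Tendsto (fun n => g.G x (s n) (s n)) atTop (𝓝 0)

/-- `(x_n)` is a G-Cauchy sequence. -/
def GCauchy {X : Type*} (g : GMetricSpace X) (s : ℕ → X) : Prop :=
  ∀ ε > 0, ∃ N, ∀ m ≥ N, ∀ n ≥ N, g.G (s n) (s m) (s m) < ε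

/-- `(X,G)` is a symmetric G-metric space. -/
def GSymmetric {X : Type*} (g : GMetricSpace X) : Prop :=
  ∀ x y, g.G x y y = g.G x x y

/-- `T` is orbitally continuous. -/
def OrbContinuous {X : Type*} (g : GMetricSpace X) (T : X → X) : Prop :=
  ∀ (x xs : X) (φ : ℕ → ℕ), StrictMono φ →
    GConv g (fun i => T^[φ i] x) xs → GConv g (fun i => T (T^[φ i] x)) (T xs)

/-- `X` is `T`-orbitally complete. -/
def TOrbComplete {X : Type*} (g : GMetricSpace X) (T : X → X) : Prop :=
  ∀ (a : X) (s : ℕ → X), (∀ i, ∃ k, s i = T^[k] a) → GCauchy g s → ∃ u, GConv g s u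

theorem stmt_4 (g : ℝ → ℝ)
    (hnonneg : ∀ t, 0 ≤ t → 0 ≤ g t)
    (husc : ∀ t, 0 ≤ t → ∀ u : ℕ → ℝ, (∀ n, 0 ≤ u n) →
      Tendsto u atTop (𝓝 t) → Filter.limsup (fun n => g (u n)) atTop ≤ g t)
    (hmono : ∀ s t, 0 ≤ s → s ≤ t → g s ≤ g t) :
    (∀ t > (0:ℝ), g t < t) ↔ (∀ t > (0:ℝ), Tendsto (fun n => g^[n] t) atTop (𝓝 0)) := by
  constructor
  · intro h t ht
    -- g 0 = 0
    have hg0 : g 0 = 0 := by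
      by_contra h0
      have hpos : 0 < g 0 := lt_of_le_of_ne (hnonneg 0 le_rfl) (Ne.symm h0)
      have h1 : g 0 ≤ g (g 0) := hmono 0 (g 0) le_rfl hpos.le
      exact absurd (h1.trans_lt (h (g 0) hpos)) (lt_irrefl _)
    set a : ℕ → ℝ := fun n => g^[n] t with ha
    have hnn : ∀ n, 0 ≤ a n := by
      intro n
      induction n with
      | zero => exact ht.le
      | succ n ih => simpa [ha, Function.iterate_succ_apply'] using hnonneg _ ih
    have hstep : ∀ n, a (n + 1) ≤ a n := by
      intro n
      have : a (n + 1) = g (a n) := by simp [ha, Function.iterate_succ_apply']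
      rw [this]
      rcases lt_or_eq_of_le (hnn n) with hp | hp
      · exact (h _ hp).le
      · simp [← hp, hg0]
    have hanti : Antitone a := antitone_nat_of_succ_le hstep
    have hbdd : BddBelow (Set.range a) := ⟨0, by rintro x ⟨n, rfl⟩; exact hnn n⟩
    have htend : Tendsto a atTop (𝓝 (⨅ n, a n)) := tendsto_atTop_ciInf hanti hbdd
    set L := ⨅ n, a n with hL
    have hL0 : 0 ≤ L := le_ciInf hnn
    have hLeq : L = 0 := by
      rcases lt_or_eq_of_le hL0 with hp | hp
      · exfalso
        have husc' := husc L hL0 a hnn htend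
        have htend' : Tendsto (fun n => g (a n)) atTop (𝓝 L) := by
          have : Tendsto (fun n => a (n + 1)) atTop (𝓝 L) :=
            htend.comp (tendsto_add_atTop_nat 1)
          refine this.congr fun n => ?_
          simp [ha, Function.iterate_succ_apply']
        rw [htend'.limsup_eq] at husc'
        exact absurd (husc'.trans_lt (h L hp)) (lt_irrefl _)
      · exact hp.symm
    rwa [hLeq] at htend
  · intro h t ht
    by_contra hlt
    push_neg at hlt
    have hkey : ∀ n, t ≤ g^[n] t := by
      intro n
      induction n with
      | zero => exact le_rfl
      | succ n ih =>
        rw [Function.iterate_succ_apply']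
        exact hlt.trans (hmono t _ ht.le ih)
    have := ge_of_tendsto (h t ht) (Filter.eventually_atTop.2 ⟨0, fun n _ => hkey n⟩)
    exact absurd (ht.trans_le this) (lt_irrefl _)
end

section
/- Let (X,G) be a symmetric G-metric space and T: X → X an injective, orbitally continuous map such that X is T-orbitally complete and T satisfies G(Tx,Ty,Tz) < q·max{ G(x,y,z), a(x,y,z)·G(Tx,y,z)·G(x,Ty,z)·G(x,y,Tz), [G(x,y,z)·G(Tx,Ty,Tz)]^{-1}·G(x,Tx,Tx)·G(y,Ty,Ty)·G(z,Tz,Tz) } for all x,y,z ∈ X with x ≠ y, where 0 ≤ q < 1 and a: X³ → [0,∞). Then for each x ∈ X, the sequence (T^n x) G-converges to some point u_x ∈ X with T u_x = u_x. -/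
/-!
In a symmetric G-metric space `G x y y` is a genuine metric, and G-convergence and G-Cauchy
sequences are convergence and Cauchy sequences for it. At the triple `(y, T y, T y)` the
contractive condition collapses to `G (T y) (T² y) (T² y) ≤ q G y (T y) (T y)`, so every orbit
moves in geometrically shrinking steps and is Cauchy. Orbital completeness provides a limit `u`;
by orbital continuity the shifted orbit converges to `T u` as well, hence `T u = u`.
-/

open Filter Topology Function

namespace GMetricSpace

variable {X : Type*} (g : GMetricSpace X)

theorem G_self (x : X) : g.G x x x = 0 :=
  (g.eq_zero_iff x x x).2 ⟨rfl, rfl⟩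

theorem G_eq_zero_iff_left {x y : X} : g.G x y y = 0 ↔ x = y := by
  simp [g.eq_zero_iff]

end GMetricSpace

section Symmetric

variable {X : Type*} {g : GMetricSpace X}

theorem GSymmetric.G_comm (hsym : GSymmetric g) (x y : X) : g.G x y y = g.G y x x := by
  rw [hsym, g.symm_cycle, g.symm_cycle]

abbrev GSymmetric.toMetricSpace (hsym : GSymmetric g) : MetricSpace X where
  dist x y := g.G x y y
  dist_self := g.G_self
  dist_comm := hsym.G_comm
  dist_triangle x y z := g.rect x z z y
  eq_of_dist_eq_zero := g.G_eq_zero_iff_left.1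

end Symmetric

section MetricOfG

variable {X : Type*} [PseudoMetricSpace X] {g : GMetricSpace X}

theorem gConv_iff_tendsto (hdist : ∀ x y, dist x y = g.G x y y) {s : ℕ → X} {u : X} :
    GConv g s u ↔ Tendsto s atTop (𝓝 u) := by
  refine (tendsto_congr fun n => ?_).trans tendsto_iff_dist_tendsto_zero.symm
  rw [dist_comm, hdist]

theorem gCauchy_iff_cauchySeq (hdist : ∀ x y, dist x y = g.G x y y) {s : ℕ → X} :
    GCauchy g s ↔ CauchySeq s := by
  simp only [GCauchy, Metric.cauchySeq_iff, ← hdist]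
  exact forall₂_congr fun _ _ => exists_congr fun _ =>
    forall₂_congr fun _ _ => forall₂_congr fun _ _ => by rw [dist_comm]

end MetricOfG

theorem cauchySeq_iterate_of_dist_le_mul {X : Type*} [PseudoMetricSpace X] {T : X → X} {q : ℝ}
    (hq0 : 0 ≤ q) (hq1 : q < 1) (hT : ∀ y, dist (T y) (T (T y)) ≤ q * dist y (T y)) (x : X) :
    CauchySeq fun n => T^[n] x := by
  refine cauchySeq_of_le_geometric q (dist x (T x)) hq1 fun n => ?_
  rw [mul_comm]
  refine le_geom (u := fun n => dist (T^[n] x) (T^[n + 1] x)) hq0 n fun k _ => ?_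
  simpa only [iterate_succ_apply'] using hT (T^[k] x)

/-- Where the paper leaves the third term undefined, `G x y z * G (T x) (T y) (T z) = 0`,
the inverse is the junk value `0`. -/
def GContractive {X : Type*} (g : GMetricSpace X) (T : X → X) (q : ℝ) (a : X → X → X → ℝ) :
    Prop :=
  ∀ x y z, x ≠ y →
    g.G (T x) (T y) (T z) <
      q * max (g.G x y z)
        (max (a x y z * g.G (T x) y z * g.G x (T y) z * g.G x y (T z))
          ((g.G x y z * g.G (T x) (T y) (T z))⁻¹ *
            (g.G x (T x) (T x) * g.G y (T y) (T y) * g.G z (T z) (T z))))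

/-- At the triple `(y, T y, T y)` the second term of the maximum vanishes and the third one
reduces to `G (T y) (T² y) (T² y)`, which therefore cannot realise the maximum. -/
theorem GContractive.G_apply_le {X : Type*} {g : GMetricSpace X} {T : X → X} {q : ℝ}
    {a : X → X → X → ℝ} (hT : GContractive g T q a) (hq1 : q < 1) (y : X) :
    g.G (T y) (T (T y)) (T (T y)) ≤ q * g.G y (T y) (T y) := by
  by_cases hy : y = T y
  · rw [← hy, ← hy, g.G_self, mul_zero]
  have h := hT y (T y) (T y) hy
  set D := g.G y (T y) (T y)
  set E := g.G (T y) (T (T y)) (T (T y))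
  have hD : 0 < D := (g.nonneg _ _ _).lt_of_ne' ((g.G_eq_zero_iff_left).not.2 hy)
  have hE : 0 ≤ E := g.nonneg _ _ _
  have hthird : (D * E)⁻¹ * (D * E * E) = E := by
    rcases hE.eq_or_lt with hE0 | hEpos
    · simp [← hE0]
    · field_simp
  rw [g.G_self, mul_zero, zero_mul, zero_mul, hthird, max_eq_right hE] at h
  rcases le_total E D with hED | hDE
  · rw [max_eq_left hED] at h
    exact h.le
  · rw [max_eq_right hDE] at h
    nlinarith

theorem stmt_5_general {X : Type*} (g : GMetricSpace X) (hsym : GSymmetric g)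
    (T : X → X)
    (horb : OrbContinuous g T) (hcomp : TOrbComplete g T)
    (q : ℝ) (hq0 : 0 ≤ q) (hq1 : q < 1)
    (a : X → X → X → ℝ)
    (hcontr : ∀ x y z, x ≠ y →
      g.G (T x) (T y) (T z) <
        q * max (g.G x y z)
          (max (a x y z * g.G (T x) y z * g.G x (T y) z * g.G x y (T z))
            ((g.G x y z * g.G (T x) (T y) (T z))⁻¹ *
              (g.G x (T x) (T x) * g.G y (T y) (T y) * g.G z (T z) (T z))))) :
    ∀ x : X, ∃ u : X, GConv g (fun n => T^[n] x) u ∧ T u = u := by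
  intro x
  let _ := hsym.toMetricSpace
  have hdist : ∀ x y, dist x y = g.G x y y := fun _ _ => rfl
  have hstep : ∀ y, dist (T y) (T (T y)) ≤ q * dist y (T y) :=
    GContractive.G_apply_le (a := a) hcontr hq1
  have hcauchy := cauchySeq_iterate_of_dist_le_mul hq0 hq1 hstep x
  obtain ⟨u, hu⟩ := hcomp x _ (fun n => ⟨n, rfl⟩) ((gCauchy_iff_cauchySeq hdist).2 hcauchy)
  refine ⟨u, hu, ?_⟩
  have hTu := (gConv_iff_tendsto hdist).1 (horb x u id strictMono_id hu)
  simp only [id, ← iterate_succ_apply' T] at hTu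
  rw [gConv_iff_tendsto hdist] at hu
  exact tendsto_nhds_unique hTu (hu.comp (tendsto_add_atTop_nat 1))

theorem stmt_5 {X : Type*} (g : GMetricSpace X) (hsym : GSymmetric g)
    (T : X → X) (hinj : Function.Injective T)
    (horb : OrbContinuous g T) (hcomp : TOrbComplete g T)
    (q : ℝ) (hq0 : 0 ≤ q) (hq1 : q < 1)
    (a : X → X → X → ℝ) (ha : ∀ x y z, 0 ≤ a x y z)
    (hcontr : ∀ x y z, x ≠ y →
      g.G (T x) (T y) (T z) <
        q * max (g.G x y z)
          (max (a x y z * g.G (T x) y z * g.G x (T y) z * g.G x y (T z))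
            ((g.G x y z * g.G (T x) (T y) (T z))⁻¹ *
              (g.G x (T x) (T x) * g.G y (T y) (T y) * g.G z (T z) (T z))))) :
    ∀ x : X, ∃ u : X, GConv g (fun n => T^[n] x) u ∧ T u = u :=
  stmt_5_general g hsym T horb hcomp q hq0 hq1 a hcontr
end

section
/- Let (X,G) be a symmetric G-metric space, T: X → X injective and orbitally continuous with 0 ≤ q < 1 satisfying the contractive condition G(Tx,Ty,Tz) < q·max{ G(x,y,z), a(x,y,z)·G(Tx,y,z)·G(x,Ty,z)·G(x,y,Tz), [G(x,y,z)·G(Tx,Ty,Tz)]^{-1}·G(x,Tx,Tx)·G(y,Ty,Ty)·G(z,Tz,Tz) } for all x ≠ y, and assume additionally a(x,y,z) ≤ [G(x,y,z)·G(Tx,Ty,Tz)]^{-1} whenever the right-hand side is defined. Then T has at most one fixed point. -/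
open Filter Topology Function

theorem stmt_6 {X : Type*} (g : GMetricSpace X) (hsym : GSymmetric g)
    (T : X → X) (hinj : Function.Injective T) (horb : OrbContinuous g T)
    (q : ℝ) (hq0 : 0 ≤ q) (hq1 : q < 1)
    (a : X → X → X → ℝ) (ha : ∀ x y z, 0 ≤ a x y z)
    (hcontr : ∀ x y z, x ≠ y →
      g.G (T x) (T y) (T z) <
        q * max (g.G x y z)
          (max (a x y z * g.G (T x) y z * g.G x (T y) z * g.G x y (T z))
            ((g.G x y z * g.G (T x) (T y) (T z))⁻¹ *
              (g.G x (T x) (T x) * g.G y (T y) (T y) * g.G z (T z) (T z)))))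
    (hab : ∀ x y z, x ≠ y → a x y z ≤ (g.G x y z * g.G (T x) (T y) (T z))⁻¹) :
    ∀ u v : X, T u = u → T v = v → u = v := by
  intro u v hu hv
  by_contra hne
  have h := hcontr u v v hne
  rw [hu, hv] at h
  set d := g.G u v v with hd
  have hd0 : 0 < d := by
    rcases lt_or_eq_of_le (g.nonneg u v v) with h' | h'
    · exact h'
    · exact absurd ((g.eq_zero_iff u v v).mp h'.symm).1 hne
  have huu : g.G u u u = 0 := (g.eq_zero_iff u u u).mpr ⟨rfl, rfl⟩
  rw [huu] at h
  have h2 : a u v v * d * d * d ≤ d := by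
    have hab' := hab u v v hne
    rw [hu, hv] at hab'
    have : a u v v * d * d * d ≤ (d * d)⁻¹ * d * d * d := by
      have hd3 : (0:ℝ) ≤ d * d * d := by positivity
      nlinarith [mul_le_mul_of_nonneg_right hab' hd3]
    calc a u v v * d * d * d ≤ (d * d)⁻¹ * d * d * d := this
      _ = d := by field_simp
  have hmax : max d (max (a u v v * d * d * d) ((d * d)⁻¹ * (0 * g.G v v v * g.G v v v))) ≤ d := by
    apply max_le le_rfl
    apply max_le h2
    simp [zero_mul, mul_zero]
    exact hd0.le
  have : d < q * d := lt_of_lt_of_le h (mul_le_mul_of_nonneg_left hmax hq0)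
  nlinarith
end

section
/- Let (X,G) be a symmetric G-metric space and T: X → X an injective, orbitally continuous map satisfying G(Tx,Ty,Tz) < max{ G(x,y,z), a(x,y,z)·G(Tx,y,z)·G(x,Ty,z)·G(x,y,Tz), [G(x,y,z)·G(Tx,Ty,Tz)]^{-1}·G(x,Tx,Tx)·G(y,Ty,Ty)·G(z,Tz,Tz) } for all x,y,z ∈ X with x ≠ y. If for some x₀ ∈ X the orbit sequence (T^n x₀) has a subsequence G-converging to a point u ∈ X, then T u = u. -/
open Filter Topology Function

lemma gsymm3 {X : Type*} (g : GMetricSpace X) (hsym : GSymmetric g) (x y : X) :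
    g.G x y y = g.G y x x := by
  rw [hsym x y, g.symm_cycle x x y, g.symm_cycle x y x]

lemma gconv_G_tendsto {X : Type*} (g : GMetricSpace X) (hsym : GSymmetric g)
    (s t : ℕ → X) (v w : X)
    (hs : Tendsto (fun n => g.G v (s n) (s n)) atTop (𝓝 0))
    (ht : Tendsto (fun n => g.G w (t n) (t n)) atTop (𝓝 0)) :
    Tendsto (fun n => g.G (s n) (t n) (t n)) atTop (𝓝 (g.G v w w)) := by
  have hub : ∀ n, g.G (s n) (t n) (t n) ≤
      g.G v w w + (g.G v (s n) (s n) + g.G w (t n) (t n)) := by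
    intro n
    have h1 := g.rect (s n) (t n) (t n) v
    have h2 := g.rect v (t n) (t n) w
    have h3 := gsymm3 g hsym (s n) v
    linarith
  have hlb : ∀ n, g.G v w w - (g.G v (s n) (s n) + g.G w (t n) (t n)) ≤
      g.G (s n) (t n) (t n) := by
    intro n
    have h1 := g.rect v w w (s n)
    have h2 := g.rect (s n) w w (t n)
    have h3 := gsymm3 g hsym (t n) w
    linarith
  have he : Tendsto (fun n => g.G v (s n) (s n) + g.G w (t n) (t n)) atTop (𝓝 0) := by
    simpa using hs.add ht
  have hL : Tendsto (fun n => g.G v w w - (g.G v (s n) (s n) + g.G w (t n) (t n)))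
      atTop (𝓝 (g.G v w w)) := by
    simpa using (tendsto_const_nhds (x := g.G v w w) (f := atTop)).sub he
  have hU : Tendsto (fun n => g.G v w w + (g.G v (s n) (s n) + g.G w (t n) (t n)))
      atTop (𝓝 (g.G v w w)) := by
    simpa using (tendsto_const_nhds (x := g.G v w w) (f := atTop)).add he
  exact tendsto_of_tendsto_of_tendsto_of_le_of_le hL hU hlb hub

lemma gstep {X : Type*} (g : GMetricSpace X) (T : X → X) (hinj : Function.Injective T)
    (a : X → X → X → ℝ)
    (hcontr : ∀ x y z, x ≠ y →
      g.G (T x) (T y) (T z) <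
        max (g.G x y z)
          (max (a x y z * g.G (T x) y z * g.G x (T y) z * g.G x y (T z))
            ((g.G x y z * g.G (T x) (T y) (T z))⁻¹ *
              (g.G x (T x) (T x) * g.G y (T y) (T y) * g.G z (T z) (T z)))))
    (p : X) (hp : T p ≠ p) :
    g.G (T p) (T (T p)) (T (T p)) < g.G p (T p) (T p) := by
  have hp2 : T (T p) ≠ T p := fun h => hp (hinj h)
  have hd : g.G p (T p) (T p) ≠ 0 := by
    intro h
    obtain ⟨h1, -⟩ := (g.eq_zero_iff _ _ _).1 h
    exact hp h1.symm
  have hd' : g.G (T p) (T (T p)) (T (T p)) ≠ 0 := by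
    intro h
    obtain ⟨h1, -⟩ := (g.eq_zero_iff _ _ _).1 h
    exact hp2 h1.symm
  have hc := hcontr p (T p) (T p) (fun h => hp h.symm)
  have hmid : g.G (T p) (T p) (T p) = 0 := (g.eq_zero_iff _ _ _).2 ⟨rfl, rfl⟩
  rw [hmid] at hc
  set d := g.G p (T p) (T p) with hdd
  set d' := g.G (T p) (T (T p)) (T (T p)) with hdd'
  have h3 : (d * d')⁻¹ * (d * d' * d') = d' := by
    field_simp
  rw [h3] at hc
  simp only [mul_zero, zero_mul] at hc
  rcases lt_max_iff.1 hc with h | h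
  · exact h
  rcases lt_max_iff.1 h with h' | h'
  · exact absurd h' (not_lt.2 (g.nonneg _ _ _))
  · exact absurd h' (lt_irrefl _)

theorem stmt_8 {X : Type*} (g : GMetricSpace X) (hsym : GSymmetric g)
    (T : X → X) (hinj : Function.Injective T) (horb : OrbContinuous g T)
    (a : X → X → X → ℝ) (ha : ∀ x y z, 0 ≤ a x y z)
    (hcontr : ∀ x y z, x ≠ y →
      g.G (T x) (T y) (T z) <
        max (g.G x y z)
          (max (a x y z * g.G (T x) y z * g.G x (T y) z * g.G x y (T z))
            ((g.G x y z * g.G (T x) (T y) (T z))⁻¹ *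
              (g.G x (T x) (T x) * g.G y (T y) (T y) * g.G z (T z) (T z)))))
    (x₀ : X) (u : X) (φ : ℕ → ℕ) (hφ : StrictMono φ)
    (hconv : GConv g (fun i => T^[φ i] x₀) u) :
    T u = u := by
  by_cases h0 : T x₀ = x₀
  · -- orbit is constant
    have hall : ∀ n, T^[n] x₀ = x₀ := fun n => Function.iterate_fixed h0 n
    have hconst : Tendsto (fun _ : ℕ => g.G u x₀ x₀) atTop (𝓝 0) := by
      simpa [GConv, hall] using hconv
    have hz : g.G u x₀ x₀ = 0 := tendsto_nhds_unique tendsto_const_nhds hconst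
    obtain ⟨h1, -⟩ := (g.eq_zero_iff _ _ _).1 hz
    rw [h1, h0]
  · -- main case
    have hne : ∀ n, T (T^[n] x₀) ≠ T^[n] x₀ := by
      intro n
      induction n with
      | zero => simpa using h0
      | succ n ih =>
        intro h
        rw [Function.iterate_succ_apply'] at h
        exact ih (hinj h)
    set c : ℕ → ℝ := fun n => g.G (T^[n] x₀) (T^[n+1] x₀) (T^[n+1] x₀) with hc
    have hdec : ∀ n, c (n + 1) < c n := by
      intro n
      have h := gstep g T hinj a hcontr (T^[n] x₀) (hne n)
      simp only [hc, Function.iterate_succ_apply']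
      simpa [Function.iterate_succ_apply'] using h
    have hanti : StrictAnti c := strictAnti_nat_of_succ_lt hdec
    -- convergence of shifted subsequences
    have ht : GConv g (fun i => T^[φ i + 1] x₀) (T u) := by
      have h := horb x₀ u φ hφ hconv
      have e : (fun i => T (T^[φ i] x₀)) = fun i => T^[φ i + 1] x₀ :=
        funext fun i => (Function.iterate_succ_apply' T (φ i) x₀).symm
      rwa [e] at h
    have hψ : StrictMono (fun i => φ i + 1) := fun i j h => by
      simpa using hφ h
    have hr : GConv g (fun i => T^[φ i + 2] x₀) (T (T u)) := by
      have h := horb x₀ (T u) (fun i => φ i + 1) hψ ht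
      have e : (fun i => T (T^[φ i + 1] x₀)) = fun i => T^[φ i + 2] x₀ :=
        funext fun i => (Function.iterate_succ_apply' T (φ i + 1) x₀).symm
      rwa [e] at h
    have h1 : Tendsto (fun i => c (φ i)) atTop (𝓝 (g.G u (T u) (T u))) := by
      have := gconv_G_tendsto g hsym (fun i => T^[φ i] x₀) (fun i => T^[φ i + 1] x₀)
        u (T u) hconv ht
      simpa [hc] using this
    have h2 : Tendsto (fun i => c (φ i + 1)) atTop (𝓝 (g.G (T u) (T (T u)) (T (T u)))) := by
      have := gconv_G_tendsto g hsym (fun i => T^[φ i + 1] x₀) (fun i => T^[φ i + 2] x₀)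
        (T u) (T (T u)) ht hr
      simpa [hc] using this
    have h1' : Tendsto (fun i => c (φ (i + 1))) atTop (𝓝 (g.G u (T u) (T u))) :=
      h1.comp (tendsto_add_atTop_nat 1)
    have h3 : Tendsto (fun i => c (φ i + 1)) atTop (𝓝 (g.G u (T u) (T u))) := by
      refine tendsto_of_tendsto_of_tendsto_of_le_of_le h1' h1 (fun i => ?_) (fun i => ?_)
      · exact hanti.antitone (Nat.succ_le_of_lt (hφ (Nat.lt_succ_self i)))
      · exact (hdec (φ i)).le
    have heq : g.G (T u) (T (T u)) (T (T u)) = g.G u (T u) (T u) :=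
      tendsto_nhds_unique h2 h3
    by_cases hu : T u = u
    · exact hu
    · have := gstep g T hinj a hcontr u hu
      linarith
end

section
/- Let (X,G) be a symmetric G-metric space and T: X → X injective satisfying the strict non-expansive-type condition G(Tx,Ty,Tz) < max{ G(x,y,z), [G(x,y,z)·G(Tx,Ty,Tz)]^{-1}·G(x,Tx,Tx)·G(y,Ty,Ty)·G(z,Tz,Tz) } for all x ≠ y. Then for any x₀ ∈ X with T^n x₀ ≠ T^{n+1} x₀ for all n, the sequence (G(T^n x₀, T^{n+1} x₀, T^{n+1} x₀)) is strictly decreasing, hence convergent. -/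
open Filter Topology Function

namespace GMetricSpace

variable {X : Type*} (g : GMetricSpace X)

theorem pos_of_ne {x y : X} (h : x ≠ y) (z : X) : 0 < g.G x y z :=
  (g.nonneg x y z).lt_of_ne fun h0 => h ((g.eq_zero_iff x y z).1 h0.symm).1

/-- On the triple `(x, Tx, Tx)` the second term of the maximum collapses to `G(Tx, T²x, T²x)`,
so the strict inequality can only hold through the first term. -/
theorem G_apply_lt_of_ne_apply {T : X → X}
    (hcontr : ∀ x y z, x ≠ y →
      g.G (T x) (T y) (T z) <
        max (g.G x y z)
          ((g.G x y z * g.G (T x) (T y) (T z))⁻¹ *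
            (g.G x (T x) (T x) * g.G y (T y) (T y) * g.G z (T z) (T z))))
    {x : X} (hx : x ≠ T x) :
    g.G (T x) (T (T x)) (T (T x)) < g.G x (T x) (T x) := by
  have hpos := g.pos_of_ne hx (T x)
  have hcollapse : ∀ b : ℝ, (g.G x (T x) (T x) * b)⁻¹ * (g.G x (T x) (T x) * b * b) = b := by
    intro b
    rcases eq_or_ne b 0 with rfl | hb
    · simp
    · field_simp
  have h := hcontr x (T x) (T x) hx
  rw [hcollapse] at h
  exact (lt_max_iff.1 h).resolve_right (lt_irrefl _)

end GMetricSpace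

theorem stmt_9_general {X : Type*} (g : GMetricSpace X)
    (T : X → X)
    (hcontr : ∀ x y z, x ≠ y →
      g.G (T x) (T y) (T z) <
        max (g.G x y z)
          ((g.G x y z * g.G (T x) (T y) (T z))⁻¹ *
            (g.G x (T x) (T x) * g.G y (T y) (T y) * g.G z (T z) (T z))))
    (x₀ : X) (hne : ∀ n : ℕ, T^[n] x₀ ≠ T^[n + 1] x₀) :
    StrictAnti (fun n : ℕ => g.G (T^[n] x₀) (T^[n + 1] x₀) (T^[n + 1] x₀)) ∧
      ∃ L : ℝ, Tendsto (fun n : ℕ => g.G (T^[n] x₀) (T^[n + 1] x₀) (T^[n + 1] x₀))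
        atTop (𝓝 L) := by
  set d : ℕ → ℝ := fun n => g.G (T^[n] x₀) (T^[n + 1] x₀) (T^[n + 1] x₀)
  have hanti : StrictAnti d := strictAnti_nat_of_succ_lt fun n => by
    have hstep := g.G_apply_lt_of_ne_apply hcontr (x := T^[n] x₀)
      (by rw [← iterate_succ_apply' T n x₀]; exact hne n)
    simpa only [d, ← iterate_succ_apply' T] using hstep
  have hbdd : BddBelow (Set.range d) := ⟨0, by rintro _ ⟨n, rfl⟩; exact g.nonneg _ _ _⟩
  exact ⟨hanti, ⨅ n, d n, tendsto_atTop_ciInf hanti.antitone hbdd⟩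

theorem stmt_9 {X : Type*} (g : GMetricSpace X) (hsym : GSymmetric g)
    (T : X → X) (hinj : Function.Injective T)
    (hcontr : ∀ x y z, x ≠ y →
      g.G (T x) (T y) (T z) <
        max (g.G x y z)
          ((g.G x y z * g.G (T x) (T y) (T z))⁻¹ *
            (g.G x (T x) (T x) * g.G y (T y) (T y) * g.G z (T z) (T z))))
    (x₀ : X) (hne : ∀ n : ℕ, T^[n] x₀ ≠ T^[n + 1] x₀) :
    StrictAnti (fun n : ℕ => g.G (T^[n] x₀) (T^[n + 1] x₀) (T^[n + 1] x₀)) ∧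
      ∃ L : ℝ, Tendsto (fun n : ℕ => g.G (T^[n] x₀) (T^[n + 1] x₀) (T^[n + 1] x₀))
        atTop (𝓝 L) :=
  stmt_9_general g T hcontr x₀ hne
end

section
/- Let (X,G) be a symmetric G-metric space, h: [0,∞)³ → [0,∞) upper semicontinuous and nondecreasing in each variable with h(t,t,t) < t for all t > 0, and T: X → X injective, orbitally continuous, with X T-orbitally complete, satisfying G(Tx,Ty,Tz) ≤ h( G(x,y,z), [G(x,y,z)·G(Tx,Ty,Tz)]^{-1}·G(x,Tx,Tx)·G(y,Ty,Ty)·G(z,Tz,Tz), a(x,y,z)·G(Tx,y,z)·G(x,Ty,z)·G(x,y,Tz) ) for all x ≠ y, where a: X³ → [0,∞) satisfies a(x,y,y)=0 for all x,y. Then for each x ∈ X the orbit (T^n x) G-converges to some u_x with T u_x = u_x. -/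
open Filter Topology Function

/-! Along an orbit the contractive condition is only ever applied with `z = y`, where `a`
vanishes and the middle argument of `h` collapses to `G(Tx, T²x, T²x)` when `y = Tx`.
Comparing successive gaps `G(Tⁿx, Tⁿ⁺¹x, Tⁿ⁺¹x)` with `h(t, t, t) < t` makes them decrease to `0`.
If the orbit were not Cauchy, minimal crossings of a level `ε` would give pairs `(n, m)` with
`G(Tⁿx, Tᵐx, Tᵐx)` and `G(Tⁿ⁺¹x, Tᵐ⁺¹x, Tᵐ⁺¹x)` both tending to `ε` while the middle argument
tends to `0`; upper semicontinuity of `h` then forces `ε ≤ h(ε, 0, 0) < ε`. The limit of the orbit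
is fixed by orbital continuity and uniqueness of limits. -/

namespace GMetricSpace

variable {X : Type*} (g : GMetricSpace X)

theorem eq_of_G_eq_zero {x y : X} (h : g.G x y y = 0) : x = y :=
  ((g.eq_zero_iff x y y).mp h).1

theorem G_pos_of_ne {x y : X} (h : x ≠ y) : 0 < g.G x y y :=
  (g.nonneg x y y).lt_of_ne fun e => h (g.eq_of_G_eq_zero e.symm)

theorem G_triangle (x y z : X) : g.G x z z ≤ g.G x y y + g.G y z z :=
  g.rect x z z y

variable {g}

theorem G_comm (hsym : GSymmetric g) (x y : X) : g.G x y y = g.G y x x := by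
  rw [hsym x y, g.symm_swap x x y, g.symm_cycle x y x]

theorem G_le_add_add (hsym : GSymmetric g) (x x' y y' : X) :
    g.G x' y' y' ≤ g.G x x' x' + g.G x y y + g.G y y' y' := by
  have h₁ := g.G_triangle x' x y'
  have h₂ := g.G_triangle x y y'
  rw [G_comm hsym x' x] at h₁
  linarith

end GMetricSpace

open GMetricSpace

section

variable {X : Type*} {g : GMetricSpace X}

theorem GConv.unique (hsym : GSymmetric g) {s : ℕ → X} {u v : X} (hu : GConv g s u)
    (hv : GConv g s v) : u = v := by
  have hsum : Tendsto (fun n => g.G u (s n) (s n) + g.G v (s n) (s n)) atTop (𝓝 0) := by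
    simpa using hu.add hv
  refine g.eq_of_G_eq_zero (le_antisymm (ge_of_tendsto' hsum fun n => ?_) (g.nonneg _ _ _))
  calc g.G u v v ≤ g.G u (s n) (s n) + g.G (s n) v v := g.G_triangle _ _ _
    _ = g.G u (s n) (s n) + g.G v (s n) (s n) := by rw [G_comm hsym (s n) v]

theorem apply_eq_of_gConv_iterate (hsym : GSymmetric g) {T : X → X} (horb : OrbContinuous g T)
    {x u : X} (hu : GConv g (fun n => T^[n] x) u) : T u = u := by
  have hTu : GConv g (fun n => T^[n + 1] x) (T u) := by
    simpa only [id_eq, iterate_succ_apply'] using horb x u id strictMono_id hu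
  exact hTu.unique hsym (hu.comp (tendsto_add_atTop_nat 1))

structure IsComparisonFunction (h : ℝ → ℝ → ℝ → ℝ) : Prop where
  limsup_le : ∀ p q r : ℝ, 0 ≤ p → 0 ≤ q → 0 ≤ r →
    ∀ u v w : ℕ → ℝ, (∀ n, 0 ≤ u n) → (∀ n, 0 ≤ v n) → (∀ n, 0 ≤ w n) →
    Tendsto u atTop (𝓝 p) → Tendsto v atTop (𝓝 q) → Tendsto w atTop (𝓝 r) →
    Filter.limsup (fun n => h (u n) (v n) (w n)) atTop ≤ h p q r
  mono : ∀ p q r p' q' r' : ℝ, 0 ≤ p → 0 ≤ q → 0 ≤ r →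
    p ≤ p' → q ≤ q' → r ≤ r' → h p q r ≤ h p' q' r'
  lt_self : ∀ t > (0 : ℝ), h t t t < t

theorem IsComparisonFunction.not_eventually_le {h : ℝ → ℝ → ℝ → ℝ} (hh : IsComparisonFunction h)
    {u v w s : ℕ → ℝ} (hu : ∀ n, 0 ≤ u n) (hv : ∀ n, 0 ≤ v n) (hw : ∀ n, 0 ≤ w n)
    {p q r t : ℝ} (hup : Tendsto u atTop (𝓝 p)) (hvq : Tendsto v atTop (𝓝 q))
    (hwr : Tendsto w atTop (𝓝 r)) (hst : Tendsto s atTop (𝓝 t)) (ht : 0 < t)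
    (hpt : p ≤ t) (hqt : q ≤ t) (hrt : r ≤ t) :
    ¬ ∀ᶠ n in atTop, s n ≤ h (u n) (v n) (w n) := by
  intro hs
  have hp : 0 ≤ p := ge_of_tendsto' hup hu
  have hq : 0 ≤ q := ge_of_tendsto' hvq hv
  have hr : 0 ≤ r := ge_of_tendsto' hwr hw
  have hlim : limsup (fun n => h (u n) (v n) (w n)) atTop < t :=
    (hh.limsup_le p q r hp hq hr u v w hu hv hw hup hvq hwr).trans_lt
      ((hh.mono p q r t t t hp hq hr hpt hqt hrt).trans_lt (hh.lt_self t ht))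
  -- all three arguments are eventually below `t + 1`, which bounds `h` by monotonicity
  have hbdd : IsBoundedUnder (· ≤ ·) atTop (fun n => h (u n) (v n) (w n)) := by
    refine ⟨h (t + 1) (t + 1) (t + 1), eventually_map.mpr ?_⟩
    filter_upwards [hup.eventually_lt_const (show p < t + 1 by linarith),
      hvq.eventually_lt_const (show q < t + 1 by linarith),
      hwr.eventually_lt_const (show r < t + 1 by linarith)] with n hun hvn hwn
    exact hh.mono _ _ _ _ _ _ (hu n) (hv n) (hw n) hun.le hvn.le hwn.le
  obtain ⟨c, hlim_c, hct⟩ := exists_between hlim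
  have htc : t ≤ c := le_of_tendsto hst <| by
    filter_upwards [hs, eventually_lt_of_limsup_lt hlim_c hbdd] with n hsn hn
    exact hsn.trans hn.le
  linarith

/-- The contractive condition at `z = y`, where `a` vanishes. -/
def IsPairContraction (g : GMetricSpace X) (h : ℝ → ℝ → ℝ → ℝ) (T : X → X) : Prop :=
  ∀ x y, x ≠ y → g.G (T x) (T y) (T y) ≤
    h (g.G x y y) ((g.G x y y * g.G (T x) (T y) (T y))⁻¹ *
      (g.G x (T x) (T x) * g.G y (T y) (T y) * g.G y (T y) (T y))) 0

section Orbit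

variable {h : ℝ → ℝ → ℝ → ℝ} {T : X → X}

theorem IsPairContraction.G_apply_le_of_ne (hT : IsPairContraction g h T) {x : X}
    (hx : T x ≠ T (T x)) :
    g.G (T x) (T (T x)) (T (T x)) ≤
      h (g.G x (T x) (T x)) (g.G (T x) (T (T x)) (T (T x))) 0 := by
  have hx' : x ≠ T x := fun e => hx (congrArg T e)
  have hd := (g.G_pos_of_ne hx').ne'
  have he := (g.G_pos_of_ne hx).ne'
  convert hT x (T x) hx' using 2
  field_simp

theorem IsPairContraction.G_apply_le (hh : IsComparisonFunction h) (hT : IsPairContraction g h T)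
    (x : X) : g.G (T x) (T (T x)) (T (T x)) ≤ g.G x (T x) (T x) := by
  by_cases hx : T x = T (T x)
  · rw [← hx, g.G_self]
    exact g.nonneg _ _ _
  by_contra! hlt
  have he := g.G_pos_of_ne hx
  have := (hT.G_apply_le_of_ne hx).trans_lt <|
    (hh.mono _ _ _ _ _ _ (g.nonneg _ _ _) he.le le_rfl hlt.le le_rfl he.le).trans_lt
      (hh.lt_self _ he)
  exact lt_irrefl _ this

theorem tendsto_G_iterate_succ (hh : IsComparisonFunction h) (hT : IsPairContraction g h T)
    (x : X) :
    Tendsto (fun n => g.G (T^[n] x) (T^[n + 1] x) (T^[n + 1] x)) atTop (𝓝 0) := by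
  set D := fun n => g.G (T^[n] x) (T^[n + 1] x) (T^[n + 1] x) with hD
  have hD0 : ∀ n, 0 ≤ D n := fun n => g.nonneg _ _ _
  have hanti : Antitone D := antitone_nat_of_succ_le fun n => by
    simpa only [hD, iterate_succ_apply'] using hT.G_apply_le hh (T^[n] x)
  have hbdd : BddBelow (Set.range D) := ⟨0, Set.forall_mem_range.2 hD0⟩
  have hL : Tendsto D atTop (𝓝 (⨅ n, D n)) := tendsto_atTop_ciInf hanti hbdd
  obtain hL0 | hLpos := (le_ciInf hD0).eq_or_lt
  · rwa [← hL0] at hL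
  have hstep : ∀ n, D (n + 1) ≤ h (D n) (D (n + 1)) 0 := fun n => by
    have hne : T^[n + 1] x ≠ T^[n + 2] x := fun e => by
      have hDn : D (n + 1) = 0 := by
        show g.G _ (T^[n + 2] x) _ = 0
        rw [← e, g.G_self]
      exact hLpos.not_ge ((ciInf_le hbdd (n + 1)).trans_eq hDn)
    simpa only [hD, iterate_succ_apply'] using hT.G_apply_le_of_ne (x := T^[n] x)
      (by simpa only [iterate_succ_apply'] using hne)
  have hL' := hL.comp (tendsto_add_atTop_nat 1)
  exact absurd (Eventually.of_forall hstep) <| hh.not_eventually_le hD0 (fun n => hD0 (n + 1))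
    (fun _ => le_rfl) hL hL' tendsto_const_nhds hL' hLpos le_rfl le_rfl hLpos.le

end Orbit

theorem exists_crossing_of_not_gCauchy (hsym : GSymmetric g) {s : ℕ → X} (hs : ¬ GCauchy g s) :
    ∃ ε > 0, ∀ N, ∃ n ≥ N, ∃ j, g.G (s n) (s (n + j)) (s (n + j)) < ε ∧
      ε ≤ g.G (s n) (s (n + j + 1)) (s (n + j + 1)) := by
  simp only [GCauchy, not_forall, not_exists, not_lt] at hs
  obtain ⟨ε, hε, hs⟩ := hs
  refine ⟨ε, hε, fun N => ?_⟩
  obtain ⟨m, hm, n, hn, hle⟩ := hs N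
  -- the first `j` past `n` at which the distance from `s n` reaches `ε`
  have hcross : ∀ n m, ε ≤ g.G (s n) (s m) (s m) → n ≤ m → ∃ j,
      ¬ ε ≤ g.G (s n) (s (n + j)) (s (n + j)) ∧ ε ≤ g.G (s n) (s (n + j + 1)) (s (n + j + 1)) :=
    fun n m hle hnm => Nat.exists_not_and_succ_of_not_zero_of_exists
      (by simpa [g.G_self] using hε) ⟨m - n, by rwa [Nat.add_sub_cancel' hnm]⟩
  obtain hnm | hmn := le_total n m
  · obtain ⟨j, hj⟩ := hcross n m hle hnm
    exact ⟨n, hn, j, not_le.mp hj.1, hj.2⟩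
  · obtain ⟨j, hj⟩ := hcross m n (by rwa [G_comm hsym]) hmn
    exact ⟨m, hm, j, not_le.mp hj.1, hj.2⟩

section Crossing

variable {s : ℕ → X}
  (hD : Tendsto (fun n => g.G (s n) (s (n + 1)) (s (n + 1))) atTop (𝓝 0))
  {n m : ℕ → ℕ} {ε : ℝ}
include hD

theorem tendsto_G_of_crossing (hm : Tendsto m atTop atTop)
    (hlt : ∀ k, g.G (s (n k)) (s (m k)) (s (m k)) < ε)
    (hle : ∀ k, ε ≤ g.G (s (n k)) (s (m k + 1)) (s (m k + 1))) :
    Tendsto (fun k => g.G (s (n k)) (s (m k + 1)) (s (m k + 1))) atTop (𝓝 ε) := by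
  refine tendsto_of_tendsto_of_tendsto_of_le_of_le tendsto_const_nhds
    (by simpa using tendsto_const_nhds.add (hD.comp hm)) hle fun k => ?_
  have := g.G_triangle (s (n k)) (s (m k)) (s (m k + 1))
  have := hlt k
  linarith

theorem tendsto_G_succ_of_tendsto (hsym : GSymmetric g) (hn : Tendsto n atTop atTop)
    (hm : Tendsto m atTop atTop)
    (hR : Tendsto (fun k => g.G (s (n k)) (s (m k)) (s (m k))) atTop (𝓝 ε)) :
    Tendsto (fun k => g.G (s (n k + 1)) (s (m k + 1)) (s (m k + 1))) atTop (𝓝 ε) := by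
  have hDn := hD.comp hn
  have hDm := hD.comp hm
  refine tendsto_of_tendsto_of_tendsto_of_le_of_le (by simpa using (hR.sub hDn).sub hDm)
    (by simpa using (hDn.add hR).add hDm) (fun k => ?_) (fun k => ?_)
  · have := G_le_add_add hsym (s (n k + 1)) (s (n k)) (s (m k + 1)) (s (m k))
    rw [G_comm hsym (s (n k + 1)) (s (n k)), G_comm hsym (s (m k + 1)) (s (m k))] at this
    linarith
  · exact G_le_add_add hsym (s (n k)) _ (s (m k)) _

end Crossing

theorem gCauchy_iterate (hsym : GSymmetric g) {h : ℝ → ℝ → ℝ → ℝ} (hh : IsComparisonFunction h)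
    {T : X → X} (hT : IsPairContraction g h T) (x : X) : GCauchy g (fun n => T^[n] x) := by
  set s : ℕ → X := fun n => T^[n] x
  set d : ℕ → ℕ → ℝ := fun i l => g.G (s i) (s l) (s l)
  have hsucc : ∀ n, T (s n) = s (n + 1) := fun n => (iterate_succ_apply' T n x).symm
  have hD : Tendsto (fun n => d n (n + 1)) atTop (𝓝 0) := tendsto_G_iterate_succ hh hT x
  by_contra hC
  obtain ⟨ε, hε, hcross⟩ := exists_crossing_of_not_gCauchy hsym hC
  choose n hn j hj using hcross
  have hn_top : Tendsto n atTop atTop := tendsto_atTop_mono hn tendsto_id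
  have hnj_top : Tendsto (fun k => n k + j k) atTop atTop :=
    tendsto_atTop_mono (fun k => (hn k).trans (Nat.le_add_right _ _)) tendsto_id
  set m : ℕ → ℕ := fun k => n k + j k + 1
  have hm_top : Tendsto m atTop atTop := (tendsto_add_atTop_nat 1).comp hnj_top
  have hR : Tendsto (fun k => d (n k) (m k)) atTop (𝓝 ε) :=
    tendsto_G_of_crossing hD hnj_top (fun k => (hj k).1) (fun k => (hj k).2)
  have hQ : Tendsto (fun k => d (n k + 1) (m k + 1)) atTop (𝓝 ε) :=
    tendsto_G_succ_of_tendsto hD hsym hn_top hm_top hR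
  set V : ℕ → ℝ := fun k => (d (n k) (m k) * d (n k + 1) (m k + 1))⁻¹ *
    (d (n k) (n k + 1) * d (m k) (m k + 1) * d (m k) (m k + 1))
  have hV : Tendsto V atTop (𝓝 0) := by
    have := ((hR.mul hQ).inv₀ (by positivity)).mul
      (((hD.comp hn_top).mul (hD.comp hm_top)).mul (hD.comp hm_top))
    simp only [mul_zero] at this
    exact this
  have hstep : ∀ k, d (n k + 1) (m k + 1) ≤ h (d (n k) (m k)) (V k) 0 := fun k => by
    have hne : s (n k) ≠ s (m k) := fun e => by
      have := (hj k).2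
      rw [e, g.G_self] at this
      linarith
    have := hT _ _ hne
    rwa [hsucc, hsucc] at this
  have hV_nonneg : ∀ k, 0 ≤ V k := fun k => by
    have hG := g.nonneg
    exact mul_nonneg (inv_nonneg.2 (mul_nonneg (hG _ _ _) (hG _ _ _)))
      (mul_nonneg (mul_nonneg (hG _ _ _) (hG _ _ _)) (hG _ _ _))
  exact hh.not_eventually_le (fun k => g.nonneg _ _ _) hV_nonneg (fun _ => le_rfl) hR hV
    tendsto_const_nhds hQ hε le_rfl hε.le hε.le (Eventually.of_forall hstep)

end

theorem stmt_11_general {X : Type*} (g : GMetricSpace X) (hsym : GSymmetric g)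
    (h : ℝ → ℝ → ℝ → ℝ)
    (husc : ∀ p q r : ℝ, 0 ≤ p → 0 ≤ q → 0 ≤ r →
      ∀ u v w : ℕ → ℝ, (∀ n, 0 ≤ u n) → (∀ n, 0 ≤ v n) → (∀ n, 0 ≤ w n) →
      Tendsto u atTop (𝓝 p) → Tendsto v atTop (𝓝 q) → Tendsto w atTop (𝓝 r) →
      Filter.limsup (fun n => h (u n) (v n) (w n)) atTop ≤ h p q r)
    (hmono : ∀ p q r p' q' r' : ℝ, 0 ≤ p → 0 ≤ q → 0 ≤ r →
      p ≤ p' → q ≤ q' → r ≤ r' → h p q r ≤ h p' q' r')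
    (hlt : ∀ t > (0:ℝ), h t t t < t)
    (T : X → X)
    (horb : OrbContinuous g T) (hcomp : TOrbComplete g T)
    (a : X → X → X → ℝ) (ha0 : ∀ x y, a x y y = 0)
    (hcontr : ∀ x y z, x ≠ y →
      g.G (T x) (T y) (T z) ≤
        h (g.G x y z)
          ((g.G x y z * g.G (T x) (T y) (T z))⁻¹ *
            (g.G x (T x) (T x) * g.G y (T y) (T y) * g.G z (T z) (T z)))
          (a x y z * g.G (T x) y z * g.G x (T y) z * g.G x y (T z))) :
    ∀ x : X, ∃ u : X, GConv g (fun n => T^[n] x) u ∧ T u = u := by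
  have hh : IsComparisonFunction h := ⟨husc, hmono, hlt⟩
  have hT : IsPairContraction g h T := fun x y hxy => by
    simpa only [ha0, zero_mul] using hcontr x y y hxy
  intro x
  obtain ⟨u, hu⟩ := hcomp x _ (fun n => ⟨n, rfl⟩) (gCauchy_iterate hsym hh hT x)
  exact ⟨u, hu, apply_eq_of_gConv_iterate hsym horb hu⟩

theorem stmt_11 {X : Type*} (g : GMetricSpace X) (hsym : GSymmetric g)
    (h : ℝ → ℝ → ℝ → ℝ)
    (hnonneg : ∀ p q r, 0 ≤ p → 0 ≤ q → 0 ≤ r → 0 ≤ h p q r)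
    (husc : ∀ p q r : ℝ, 0 ≤ p → 0 ≤ q → 0 ≤ r →
      ∀ u v w : ℕ → ℝ, (∀ n, 0 ≤ u n) → (∀ n, 0 ≤ v n) → (∀ n, 0 ≤ w n) →
      Tendsto u atTop (𝓝 p) → Tendsto v atTop (𝓝 q) → Tendsto w atTop (𝓝 r) →
      Filter.limsup (fun n => h (u n) (v n) (w n)) atTop ≤ h p q r)
    (hmono : ∀ p q r p' q' r' : ℝ, 0 ≤ p → 0 ≤ q → 0 ≤ r →
      p ≤ p' → q ≤ q' → r ≤ r' → h p q r ≤ h p' q' r')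
    (hlt : ∀ t > (0:ℝ), h t t t < t)
    (T : X → X) (hinj : Function.Injective T)
    (horb : OrbContinuous g T) (hcomp : TOrbComplete g T)
    (a : X → X → X → ℝ) (ha : ∀ x y z, 0 ≤ a x y z) (ha0 : ∀ x y, a x y y = 0)
    (hcontr : ∀ x y z, x ≠ y →
      g.G (T x) (T y) (T z) ≤
        h (g.G x y z)
          ((g.G x y z * g.G (T x) (T y) (T z))⁻¹ *
            (g.G x (T x) (T x) * g.G y (T y) (T y) * g.G z (T z) (T z)))
          (a x y z * g.G (T x) y z * g.G x (T y) z * g.G x y (T z))) :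
    ∀ x : X, ∃ u : X, GConv g (fun n => T^[n] x) u ∧ T u = u :=
  stmt_11_general g hsym h husc hmono hlt T horb hcomp a ha0 hcontr
end

section
/- Let h: [0,∞)³ → [0,∞) be upper semicontinuous and nondecreasing in each variable with h(t,t,t) < t for all t > 0, and define g(t) = h(t,t,t). Let (X,G) be a symmetric G-metric space and T: X → X injective satisfying G(Tx,Ty,Tz) ≤ h(G(x,y,z), [G(x,y,z)·G(Tx,Ty,Tz)]^{-1}·G(x,Tx,Tx)·G(y,Ty,Ty)·G(z,Tz,Tz), a(x,y,z)·G(Tx,y,z)·G(x,Ty,z)·G(x,y,Tz)) for all x ≠ y with a(x,y,y)=0. Then for every x ∈ X and n ∈ ℕ, G(T^n x, T^{n+1} x, T^{n+1} x) ≤ g^n(G(x, Tx, Tx)), and hence lim_{n→∞} G(T^n x, T^{n+1} x, T^{n+1} x) = 0. -/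
open Filter Topology Function

theorem stmt_12 {X : Type*} (g : GMetricSpace X) (hsym : GSymmetric g)
    (h : ℝ → ℝ → ℝ → ℝ)
    (hnonneg : ∀ p q r, 0 ≤ p → 0 ≤ q → 0 ≤ r → 0 ≤ h p q r)
    (husc : ∀ p q r : ℝ, 0 ≤ p → 0 ≤ q → 0 ≤ r →
      ∀ u v w : ℕ → ℝ, (∀ n, 0 ≤ u n) → (∀ n, 0 ≤ v n) → (∀ n, 0 ≤ w n) →
      Tendsto u atTop (𝓝 p) → Tendsto v atTop (𝓝 q) → Tendsto w atTop (𝓝 r) →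
      Filter.limsup (fun n => h (u n) (v n) (w n)) atTop ≤ h p q r)
    (hmono : ∀ p q r p' q' r' : ℝ, 0 ≤ p → 0 ≤ q → 0 ≤ r →
      p ≤ p' → q ≤ q' → r ≤ r' → h p q r ≤ h p' q' r')
    (hlt : ∀ t > (0:ℝ), h t t t < t)
    (T : X → X) (hinj : Function.Injective T)
    (a : X → X → X → ℝ) (ha : ∀ x y z, 0 ≤ a x y z) (ha0 : ∀ x y, a x y y = 0)
    (hcontr : ∀ x y z, x ≠ y →
      g.G (T x) (T y) (T z) ≤
        h (g.G x y z)
          ((g.G x y z * g.G (T x) (T y) (T z))⁻¹ *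
            (g.G x (T x) (T x) * g.G y (T y) (T y) * g.G z (T z) (T z)))
          (a x y z * g.G (T x) y z * g.G x (T y) z * g.G x y (T z))) :
    ∀ (x : X) (n : ℕ),
      g.G (T^[n] x) (T^[n + 1] x) (T^[n + 1] x) ≤
        (fun t => h t t t)^[n] (g.G x (T x) (T x)) ∧
      Tendsto (fun m : ℕ => g.G (T^[m] x) (T^[m + 1] x) (T^[m + 1] x)) atTop (𝓝 0) := by

  intro x n
  set d : ℕ → ℝ := fun m => g.G (T^[m] x) (T^[m + 1] x) (T^[m + 1] x) with hd
  have dnn : ∀ m, 0 ≤ d m := fun m => g.nonneg _ _ _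
  have key : ∀ m, d (m + 1) ≤ d m ∧ d (m + 1) ≤ h (d m) (d m) (d m) := by
    intro m
    have e1 : d m = g.G (T^[m] x) (T (T^[m] x)) (T (T^[m] x)) := by
      simp [hd, Function.iterate_succ_apply']
    have e2 : d (m + 1) = g.G (T (T^[m] x)) (T (T (T^[m] x))) (T (T (T^[m] x))) := by
      simp [hd, Function.iterate_succ_apply']
    set u := T^[m] x with hu'
    by_cases hu : u = T u
    · have h2 : T (T u) = T u := congrArg T hu.symm
      have hz : d (m + 1) = 0 := by
        rw [e2, h2]; exact (g.eq_zero_iff _ _ _).2 ⟨rfl, rfl⟩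
      exact ⟨by rw [hz]; exact dnn m,
        by rw [hz]; exact hnonneg _ _ _ (dnn m) (dnn m) (dnn m)⟩
    · have hc := hcontr u (T u) (T u) hu
      rw [ha0] at hc
      simp only [zero_mul] at hc
      rw [← e1, ← e2] at hc
      by_cases h1 : d (m + 1) = 0
      · exact ⟨by rw [h1]; exact dnn m,
          by rw [h1]; exact hnonneg _ _ _ (dnn m) (dnn m) (dnn m)⟩
      · have h1p : 0 < d (m + 1) := lt_of_le_of_ne (dnn _) (Ne.symm h1)
        have h0 : d m ≠ 0 := by
          intro h0
          exact hu ((g.eq_zero_iff _ _ _).1 (e1 ▸ h0)).1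
        have hne : d m * d (m + 1) ≠ 0 := mul_ne_zero h0 h1
        have hinv : (d m * d (m + 1))⁻¹ * (d m * d (m + 1) * d (m + 1)) = d (m + 1) := by
          rw [inv_mul_cancel_left₀ hne]
        rw [hinv] at hc
        have hle : d (m + 1) ≤ d m := by
          by_contra hltc
          push_neg at hltc
          have h3 : h (d m) (d (m + 1)) 0 ≤ h (d (m + 1)) (d (m + 1)) (d (m + 1)) :=
            hmono _ _ _ _ _ _ (dnn m) (dnn _) le_rfl hltc.le le_rfl (dnn _)
          linarith [hlt (d (m + 1)) h1p, hc.trans h3]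
        refine ⟨hle, hc.trans ?_⟩
        exact hmono _ _ _ _ _ _ (dnn m) (dnn _) le_rfl le_rfl hle (dnn m)
  have hd0 : d 0 = g.G x (T x) (T x) := by simp [hd]
  have part1 : ∀ k, d k ≤ (fun t => h t t t)^[k] (g.G x (T x) (T x)) ∧
      0 ≤ (fun t => h t t t)^[k] (g.G x (T x) (T x)) := by
    intro k
    induction k with
    | zero => simpa using ⟨le_of_eq hd0, hd0 ▸ dnn 0⟩
    | succ k ih =>
      rw [Function.iterate_succ_apply']
      constructor
      · exact (key k).2.trans
          (hmono _ _ _ _ _ _ (dnn k) (dnn k) (dnn k) ih.1 ih.1 ih.1)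
      · exact hnonneg _ _ _ ih.2 ih.2 ih.2
  refine ⟨(part1 n).1, ?_⟩
  have hanti : Antitone d := antitone_nat_of_succ_le fun m => (key m).1
  have hbdd : BddBelow (Set.range d) := ⟨0, by rintro _ ⟨m, rfl⟩; exact dnn m⟩
  have hconv : Tendsto d atTop (𝓝 (⨅ m, d m)) := tendsto_atTop_ciInf hanti hbdd
  set r := ⨅ m, d m with hr
  have hr0 : 0 ≤ r := le_ciInf dnn
  have hrz : r = 0 := by
    by_contra hne
    have hrpos : 0 < r := lt_of_le_of_ne hr0 (Ne.symm hne)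
    have hlim := husc r r r hr0 hr0 hr0 d d d dnn dnn dnn hconv hconv hconv
    have hshift : Tendsto (fun m => d (m + 1)) atTop (𝓝 r) :=
      hconv.comp (tendsto_add_atTop_nat 1)
    have hls : Filter.limsup (fun m => d (m + 1)) atTop = r := hshift.limsup_eq
    have hcb : IsCoboundedUnder (· ≤ ·) atTop (fun m => d (m + 1)) :=
      (hshift.isBoundedUnder_ge).isCoboundedUnder_le
    have hb : IsBoundedUnder (· ≤ ·) atTop (fun m => h (d m) (d m) (d m)) := by
      refine isBoundedUnder_of ⟨h (d 0) (d 0) (d 0), fun m => ?_⟩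
      have := hanti (Nat.zero_le m)
      exact hmono _ _ _ _ _ _ (dnn m) (dnn m) (dnn m) this this this
    have hmain : Filter.limsup (fun m => d (m + 1)) atTop ≤ h r r r :=
      le_trans (Filter.limsup_le_limsup (Eventually.of_forall fun m => (key m).2) hcb hb) hlim
    rw [hls] at hmain
    linarith [hlt r hrpos]
  rw [hrz] at hconv
  exact hconv
end
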